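/- Let m, n ≥ 1 with m + n ≤ d, and let G = K_d − K_{m,n} be the graph on [d] obtained from the complete graph by deleting the edges of a complete bipartite graph K_{m,n}. Then ε(G) − ε(K_d) = (1/2)mn(m+n−6)d − (1/4)mn(3mn + 2m² + 2n² − 5m − 5n − 13). -/

import Mathlib

open Finset SimpleGraph

/-- A 4-cycle exists within the vertex set `s` of the graph `G`. -/
def fourCycleOn {V : Type*} (G : SimpleGraph V) (s : Set V) : Prop :=
  ∃ a b c d, a ∈ s ∧ b ∈ s ∧ c ∈ s ∧ d ∈ s ∧
    a ≠ b ∧ a ≠ c ∧ a ≠ d ∧ b ≠ c ∧ b ≠ d ∧ c ≠ d ∧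
    G.Adj a b ∧ G.Adj b c ∧ G.Adj c d ∧ G.Adj d a

/-- The pair of edges `{e,f}` spans an edge of the edge polytope: they share a
vertex, or they are disjoint and the induced subgraph on their endpoints has no 4-cycle. -/
def epPair {V : Type*} (G : SimpleGraph V) (e f : Sym2 V) : Prop :=
  (∃ v, v ∈ e ∧ v ∈ f) ∨
  ((¬ ∃ v, v ∈ e ∧ v ∈ f) ∧ ¬ fourCycleOn G {v | v ∈ e ∨ v ∈ f})

open scoped Classical in
/-- The number of edges (1-dimensional faces) of the edge polytope of `G`:
the number of unordered pairs of distinct edges satisfying `epPair`. -/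
noncomputable def epsilon {V : Type*} [Fintype V] (G : SimpleGraph V) : ℕ :=
  ((G.edgeFinset.powersetCard 2).filter
    (fun s => ∀ e ∈ s, ∀ f ∈ s, e ≠ f → epPair G e f)).card

open scoped Classical in
/-- number of 4-subsets inducing a path of length 3. -/
noncomputable def aCount {V : Type*} [Fintype V] (H : SimpleGraph V) : ℕ :=
  ((univ.powersetCard 4).filter (fun s => ∃ a b c d : V,
    s = {a, b, c, d} ∧ a ≠ b ∧ a ≠ c ∧ a ≠ d ∧ b ≠ c ∧ b ≠ d ∧ c ≠ d ∧
    H.Adj a b ∧ H.Adj b c ∧ H.Adj c d ∧ ¬H.Adj a c ∧ ¬H.Adj a d ∧ ¬H.Adj b d)).card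

open scoped Classical in
/-- number of 4-subsets inducing a cycle of length 4. -/
noncomputable def bCount {V : Type*} [Fintype V] (H : SimpleGraph V) : ℕ :=
  ((univ.powersetCard 4).filter (fun s => ∃ a b c d : V,
    s = {a, b, c, d} ∧ a ≠ b ∧ a ≠ c ∧ a ≠ d ∧ b ≠ c ∧ b ≠ d ∧ c ≠ d ∧
    H.Adj a b ∧ H.Adj b c ∧ H.Adj c d ∧ H.Adj d a ∧ ¬H.Adj a c ∧ ¬H.Adj b d)).card

open scoped Classical in
/-- number of 4-subsets inducing a path of length 2 plus an isolated vertex. -/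
noncomputable def cCount {V : Type*} [Fintype V] (H : SimpleGraph V) : ℕ :=
  ((univ.powersetCard 4).filter (fun s => ∃ a b c d : V,
    s = {a, b, c, d} ∧ a ≠ b ∧ a ≠ c ∧ a ≠ d ∧ b ≠ c ∧ b ≠ d ∧ c ≠ d ∧
    H.Adj a b ∧ H.Adj b c ∧ ¬H.Adj a c ∧ ¬H.Adj a d ∧ ¬H.Adj b d ∧ ¬H.Adj c d)).card

open scoped Classical in
/-- the number of triangles of `H`. -/
noncomputable def k3 {V : Type*} [Fintype V] (H : SimpleGraph V) : ℕ :=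
  ((univ.powersetCard 3).filter (fun s => ∀ i ∈ s, ∀ j ∈ s, i ≠ j → H.Adj i j)).card

open scoped Classical in
/-- the number of 3-subsets inducing a path with exactly two edges. -/
noncomputable def psi {V : Type*} [Fintype V] (H : SimpleGraph V) : ℕ :=
  ((univ.powersetCard 3).filter (fun s => ∃ a b c : V,
    s = {a, b, c} ∧ a ≠ b ∧ a ≠ c ∧ b ≠ c ∧ H.Adj a b ∧ H.Adj b c ∧ ¬H.Adj a c)).card

/-- the complete bipartite graph `K_{m,n}` on the vertex set `[d]`, with parts
`{0,…,m-1}` and `{m,…,m+n-1}`. -/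
def bip (d m n : ℕ) : SimpleGraph (Fin d) where
  Adj i j := ((i : ℕ) < m ∧ m ≤ (j : ℕ) ∧ (j : ℕ) < m + n) ∨
    ((j : ℕ) < m ∧ m ≤ (i : ℕ) ∧ (i : ℕ) < m + n)
  symm := by constructor; intro i j h; tauto
  loopless := by constructor; intro i h; omega

/-- the copy of `H` on the first `r` vertices of `[d]`. -/
def embedGraph {r : ℕ} (H : SimpleGraph (Fin r)) (d : ℕ) : SimpleGraph (Fin d) where
  Adj i j := ∃ (hi : (i : ℕ) < r) (hj : (j : ℕ) < r), H.Adj ⟨i, hi⟩ ⟨j, hj⟩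
  symm := by constructor; rintro i j ⟨hi, hj, h⟩; exact ⟨hj, hi, h.symm⟩
  loopless := by constructor; rintro i ⟨hi, hj, h⟩; exact H.irrefl h

/-- the subgraph of `H` consisting of the edges in the connected component `c`. -/
def compGraph {V : Type*} (H : SimpleGraph V) (c : H.ConnectedComponent) :
    SimpleGraph V where
  Adj i j := H.Adj i j ∧ H.connectedComponentMk i = c
  symm := by
    constructor
    rintro i j ⟨h, hc⟩
    exact ⟨h.symm, (SimpleGraph.ConnectedComponent.sound h.symm.reachable).trans hc⟩
  loopless := by constructor; rintro i ⟨h, _⟩; exact H.irrefl h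

open scoped Classical in
/-- `|X_{i,j}|`: the number of vertices (other than `i, j`) adjacent to `i` but not `j`. -/
noncomputable def cardX {V : Type*} [Fintype V] (H : SimpleGraph V) (i j : V) : ℕ :=
  (univ.filter (fun ℓ => ℓ ≠ i ∧ ℓ ≠ j ∧ H.Adj i ℓ ∧ ¬ H.Adj j ℓ)).card

/-!
Two distinct edges fail to span an edge of the edge polytope exactly when they are disjoint and
their four endpoints carry a 4-cycle; hence `ε(G) = C(|E(G)|, 2) - β(G)`, where `β(G)` counts
such pairs. Grouping them by their endpoint set `t`, a 4-set contributes nothing when `G[t]` has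
no 4-cycle, and otherwise the number of its three perfect matchings that lie in `G`.

For `G = K_d - K_{A,B}` the contribution of `t` depends only on how `t` meets `A` and `B`: it is
`3` when `t` misses `A` or `B` (`G[t] = K₄`), `2` when `t` has exactly one vertex in each
(`G[t]` is `K₄` minus an edge), and `0` otherwise, since then some vertex of `t` has two
non-neighbours in `t`. With `k = d - m - n` this gives
`β(G) = 3 (C(n + k, 4) + C(m + k, 4) - C(k, 4)) + 2 m n C(k, 2)` and `|E(G)| = C(d, 2) - m n`.
The case `A = B = ∅` gives `ε(K_d)`, and the difference is a polynomial identity.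
-/

section CyclePairs

open scoped Classical

variable {V : Type*} (G : SimpleGraph V)

lemma epPair_comm {e f : Sym2 V} : epPair G e f ↔ epPair G f e := by
  have h : {v | v ∈ e ∨ v ∈ f} = {v | v ∈ f ∨ v ∈ e} := Set.ext fun _ => or_comm
  simp only [epPair, h, and_comm (a := _ ∈ e)]

lemma epPair_mk_iff {x y u v : V} :
    epPair G s(x, y) s(u, v) ↔
      (x = u ∨ x = v ∨ y = u ∨ y = v) ∨ ¬ fourCycleOn G ({x, y, u, v} : Finset V) := by
  have h : {w | w ∈ s(x, y) ∨ w ∈ s(u, v)} = (({x, y, u, v} : Finset V) : Set V) := by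
    ext; simp only [Set.mem_ofPred_eq, Sym2.mem_iff, coe_insert, coe_singleton,
      Set.mem_insert_iff, Set.mem_singleton_iff, or_assoc]
  have hshare : (∃ w, w ∈ s(x, y) ∧ w ∈ s(u, v)) ↔ (x = u ∨ x = v ∨ y = u ∨ y = v) := by
    simp only [Sym2.mem_iff]
    constructor
    · rintro ⟨w, rfl | rfl, rfl | rfl⟩ <;> simp
    · rintro (rfl | rfl | rfl | rfl) <;> simp
  rw [epPair, h, hshare]
  tauto

noncomputable def verts (s : Finset (Sym2 V)) : Finset V := s.biUnion Sym2.toFinset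

lemma verts_pair (x y u v : V) : verts {s(x, y), s(u, v)} = {x, y, u, v} := by
  ext w
  simp only [verts, biUnion_insert, singleton_biUnion, Sym2.toFinset_mk_eq, mem_union,
    mem_insert, mem_singleton]
  tauto

noncomputable def quadMatchings (a b c d : V) : Finset (Finset (Sym2 V)) :=
  {{s(a, b), s(c, d)}, {s(a, c), s(b, d)}, {s(a, d), s(b, c)}}

lemma card_quadMatchings {a b c d : V}
    (hab : a ≠ b) (hac : a ≠ c) (had : a ≠ d) (hbc : b ≠ c) (hbd : b ≠ d) (hcd : c ≠ d) :
    #(quadMatchings a b c d) = 3 := by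
  have h₁ : ({s(a, b), s(c, d)} : Finset (Sym2 V)) ≠ {s(a, c), s(b, d)} := fun h => by
    simpa [hab, hac, had, hbc, hbd, hcd] using congrArg (s(a, b) ∈ ·) h
  have h₂ : ({s(a, b), s(c, d)} : Finset (Sym2 V)) ≠ {s(a, d), s(b, c)} := fun h => by
    simpa [hab, hac, had, hbc, hbd, hcd] using congrArg (s(a, b) ∈ ·) h
  have h₃ : ({s(a, c), s(b, d)} : Finset (Sym2 V)) ≠ {s(a, d), s(b, c)} := fun h => by
    simpa [hab, hac, had, hbc, hbd, hcd] using congrArg (s(a, c) ∈ ·) h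
  rw [quadMatchings, card_insert_of_notMem (by simp [h₁, h₂]), card_pair h₃]

lemma pair_mem_quadMatchings {a b c d x y u v : V}
    (hxy : x ≠ y) (hxu : x ≠ u) (hxv : x ≠ v) (hyu : y ≠ u) (hyv : y ≠ v) (huv : u ≠ v)
    (h : ({x, y, u, v} : Finset V) = {a, b, c, d}) :
    {s(x, y), s(u, v)} ∈ quadMatchings a b c d := by
  have hmem : ∀ w ∈ ({x, y, u, v} : Finset V), w = a ∨ w = b ∨ w = c ∨ w = d := by
    intro w hw; simpa [h] using hw
  simp only [quadMatchings, mem_insert, mem_singleton]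
  rcases hmem x (by simp) with rfl | rfl | rfl | rfl <;>
    rcases hmem y (by simp) with rfl | rfl | rfl | rfl <;>
    rcases hmem u (by simp) with rfl | rfl | rfl | rfl <;>
    rcases hmem v (by simp) with rfl | rfl | rfl | rfl <;>
    first
      | exact absurd rfl ‹_›
      | simp only [Sym2.eq_swap, pair_comm, true_or, or_true]

lemma not_fourCycleOn_of_not_adj {t : Finset V} (ht : #t = 4) {w z₁ z₂ : V} (hw : w ∈ t)
    (hz₁ : z₁ ∈ t) (hz₂ : z₂ ∈ t) (hwz₁ : w ≠ z₁) (hwz₂ : w ≠ z₂) (hz : z₁ ≠ z₂)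
    (h₁ : ¬ G.Adj w z₁) (h₂ : ¬ G.Adj w z₂) : ¬ fourCycleOn G t := by
  rintro ⟨a, b, c, d, ha, hb, hc, hd, hab, hac, had, hbc, hbd, hcd, h_ab, h_bc, h_cd, h_da⟩
  rw [mem_coe] at ha hb hc hd
  have hquad : {a, b, c, d} = t := eq_of_subset_of_card_le (by simp [insert_subset_iff, *])
    (by rw [ht, card_eq_four.mpr ⟨a, b, c, d, hab, hac, had, hbc, hbd, hcd, rfl⟩])
  -- `w` has two neighbours on the cycle; with `w`, `z₁`, `z₂` they would be five vertices of `t`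
  obtain ⟨p, hp, q, hq, hpq, hwp, hwq⟩ : ∃ p ∈ t, ∃ q ∈ t, p ≠ q ∧ G.Adj w p ∧ G.Adj w q := by
    rw [← hquad] at hw
    simp only [mem_insert, mem_singleton] at hw
    rcases hw with rfl | rfl | rfl | rfl
    exacts [⟨b, hb, d, hd, hbd, h_ab, h_da.symm⟩, ⟨a, ha, c, hc, hac, h_ab.symm, h_bc⟩,
      ⟨b, hb, d, hd, hbd, h_bc.symm, h_cd⟩, ⟨a, ha, c, hc, hac, h_da, h_cd.symm⟩]
  have hfive : #({w, p, q, z₁, z₂} : Finset V) = 5 := by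
    have : p ≠ z₁ ∧ p ≠ z₂ ∧ q ≠ z₁ ∧ q ≠ z₂ := by
      refine ⟨?_, ?_, ?_, ?_⟩ <;> rintro rfl <;> contradiction
    rw [card_insert_of_notMem (by simp [hwp.ne, hwq.ne, *]),
      card_insert_of_notMem (by simp [*]), card_insert_of_notMem (by simp [*]), card_pair hz]
  have := card_le_card (show {w, p, q, z₁, z₂} ⊆ t by simp [insert_subset_iff, *])
  omega

variable [Fintype V]

noncomputable def cyclePairs : Finset (Finset (Sym2 V)) :=
  (G.edgeFinset.powersetCard 2).filter fun s => ¬ ∀ e ∈ s, ∀ f ∈ s, e ≠ f → epPair G e f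

lemma epsilon_add_card_cyclePairs : epsilon G + #(cyclePairs G) = G.edgeSet.ncard.choose 2 := by
  rw [epsilon, cyclePairs, card_filter_add_card_filter_not, card_powersetCard, ← coe_edgeFinset,
    Set.ncard_coe_finset]

lemma mem_cyclePairs {s : Finset (Sym2 V)} :
    s ∈ cyclePairs G ↔ ∃ x y u v, G.Adj x y ∧ G.Adj u v ∧
      x ≠ u ∧ x ≠ v ∧ y ≠ u ∧ y ≠ v ∧ fourCycleOn G ({x, y, u, v} : Finset V) ∧
        s = {s(x, y), s(u, v)} := by
  simp only [cyclePairs, mem_filter, mem_powersetCard, card_eq_two]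
  constructor
  · rintro ⟨⟨hsub, e, f, hef, rfl⟩, hbad⟩
    have he : e ∈ G.edgeSet := mem_edgeFinset.mp (hsub (by simp))
    have hf : f ∈ G.edgeSet := mem_edgeFinset.mp (hsub (by simp))
    have hnot : ¬ epPair G e f := fun h => hbad (by
      simp only [mem_insert, mem_singleton]
      rintro _ (rfl | rfl) _ (rfl | rfl) hne
      exacts [absurd rfl hne, h, (epPair_comm G).mp h, absurd rfl hne])
    induction e using Sym2.ind with | _ x y =>
    induction f using Sym2.ind with | _ u v =>
    rw [epPair_mk_iff] at hnot
    push Not at hnot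
    obtain ⟨⟨hxu, hxv, hyu, hyv⟩, hcyc⟩ := hnot
    exact ⟨x, y, u, v, he, hf, hxu, hxv, hyu, hyv, hcyc, rfl⟩
  · rintro ⟨x, y, u, v, hxy, huv, hxu, hxv, hyu, hyv, hcyc, rfl⟩
    have hne : s(x, y) ≠ s(u, v) := by
      simp only [ne_eq, Sym2.eq_iff]
      tauto
    refine ⟨⟨?_, _, _, hne, rfl⟩, fun h => ?_⟩
    · simp only [insert_subset_iff, singleton_subset_iff, mem_edgeFinset]
      exact ⟨hxy, huv⟩
    · have := (epPair_mk_iff G).mp (h _ (by simp) _ (by simp) hne)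
      tauto

noncomputable def cyclePairsOn (t : Finset V) : Finset (Finset (Sym2 V)) :=
  (cyclePairs G).filter (verts · = t)

lemma card_cyclePairs_eq_sum :
    #(cyclePairs G) = ∑ t ∈ univ.powersetCard 4, #(cyclePairsOn G t) := by
  refine card_eq_sum_card_fiberwise fun s hs => ?_
  obtain ⟨x, y, u, v, hxy, huv, hxu, hxv, hyu, hyv, -, rfl⟩ := (mem_cyclePairs G).mp hs
  rw [mem_coe, mem_powersetCard_univ, verts_pair, card_eq_four]
  exact ⟨x, y, u, v, hxy.ne, hxu, hxv, hyu, hyv, huv.ne, rfl⟩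

lemma cyclePairsOn_eq_empty {t : Finset V} (h : ¬ fourCycleOn G t) : cyclePairsOn G t = ∅ := by
  refine filter_eq_empty_iff.mpr fun s hs ht => h ?_
  obtain ⟨x, y, u, v, -, -, -, -, -, -, hcyc, rfl⟩ := (mem_cyclePairs G).mp hs
  rwa [← ht, verts_pair]

lemma cyclePairsOn_eq {a b c d : V}
    (hab : a ≠ b) (hac : a ≠ c) (had : a ≠ d) (hbc : b ≠ c) (hbd : b ≠ d) (hcd : c ≠ d)
    (hcyc : fourCycleOn G ({a, b, c, d} : Finset V)) :
    cyclePairsOn G {a, b, c, d} = (quadMatchings a b c d).filter (· ⊆ G.edgeFinset) := by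
  ext s
  simp only [cyclePairsOn, mem_filter]
  constructor
  · rintro ⟨hs, hverts⟩
    obtain ⟨x, y, u, v, hxy, huv, hxu, hxv, hyu, hyv, -, rfl⟩ := (mem_cyclePairs G).mp hs
    rw [verts_pair] at hverts
    refine ⟨pair_mem_quadMatchings hxy.ne hxu hxv hyu hyv huv.ne hverts, ?_⟩
    simp [insert_subset_iff, hxy, huv]
  · rintro ⟨hs, hsub⟩
    have key : ∀ x y u v : V, x ≠ u → x ≠ v → y ≠ u → y ≠ v →
        ({x, y, u, v} : Finset V) = {a, b, c, d} → {s(x, y), s(u, v)} ⊆ G.edgeFinset →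
        {s(x, y), s(u, v)} ∈ cyclePairs G ∧ verts {s(x, y), s(u, v)} = {a, b, c, d} := by
      intro x y u v hxu hxv hyu hyv h hsub
      simp only [insert_subset_iff, singleton_subset_iff, mem_edgeFinset, mem_edgeSet] at hsub
      rw [verts_pair, h, mem_cyclePairs]
      exact ⟨⟨x, y, u, v, hsub.1, hsub.2, hxu, hxv, hyu, hyv, by rwa [h], rfl⟩, rfl⟩
    simp only [quadMatchings, mem_insert, mem_singleton] at hs
    rcases hs with rfl | rfl | rfl
    · exact key _ _ _ _ hac had hbc hbd rfl hsub
    · exact key _ _ _ _ hab had hbc.symm hcd (by ext; simp; tauto) hsub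
    · exact key _ _ _ _ hab hac hbd.symm hcd.symm (by ext; simp; tauto) hsub

lemma card_cyclePairsOn_of_isClique {t : Finset V} (ht : #t = 4) (h : G.IsClique (t : Set V)) :
    #(cyclePairsOn G t) = 3 := by
  obtain ⟨a, b, c, d, hab, hac, had, hbc, hbd, hcd, rfl⟩ := card_eq_four.mp ht
  have adj : ∀ x ∈ ({a, b, c, d} : Finset V), ∀ y ∈ ({a, b, c, d} : Finset V), x ≠ y →
      G.Adj x y := fun x hx y hy => h (mem_coe.mpr hx) (mem_coe.mpr hy)
  have hcyc : fourCycleOn G ({a, b, c, d} : Finset V) :=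
    ⟨a, b, c, d, by simp, by simp, by simp, by simp, hab, hac, had, hbc, hbd, hcd,
      adj _ (by simp) _ (by simp) hab, adj _ (by simp) _ (by simp) hbc,
      adj _ (by simp) _ (by simp) hcd, adj _ (by simp) _ (by simp) had.symm⟩
  rw [cyclePairsOn_eq G hab hac had hbc hbd hcd hcyc, filter_true_of_mem,
    card_quadMatchings hab hac had hbc hbd hcd]
  simp only [quadMatchings, mem_insert, mem_singleton]
  rintro _ (rfl | rfl | rfl) <;>
    simp only [insert_subset_iff, singleton_subset_iff, mem_edgeFinset, mem_edgeSet] <;>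
    exact ⟨adj _ (by simp) _ (by simp) ‹_›, adj _ (by simp) _ (by simp) ‹_›⟩

lemma card_cyclePairsOn_of_not_adj {a b c d : V}
    (hab : a ≠ b) (hac : a ≠ c) (had : a ≠ d) (hbc : b ≠ c) (hbd : b ≠ d) (hcd : c ≠ d)
    (h_ab : ¬ G.Adj a b) (h_ac : G.Adj a c) (h_ad : G.Adj a d) (h_bc : G.Adj b c)
    (h_bd : G.Adj b d) : #(cyclePairsOn G {a, b, c, d}) = 2 := by
  have hcyc : fourCycleOn G ({a, b, c, d} : Finset V) :=
    ⟨a, c, b, d, by simp, by simp, by simp, by simp, hac, hab, had, hbc.symm, hcd, hbd,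
      h_ac, h_bc.symm, h_bd, h_ad.symm⟩
  have hM : ({s(a, c), s(b, d)} : Finset (Sym2 V)) ≠ {s(a, d), s(b, c)} := fun h => by
    simpa [hab, hac, had, hbc, hbd, hcd] using congrArg (s(a, c) ∈ ·) h
  rw [cyclePairsOn_eq G hab hac had hbc hbd hcd hcyc, quadMatchings, filter_insert,
    if_neg (by simp [insert_subset_iff, h_ab]), filter_true_of_mem (by
      simp only [mem_insert, mem_singleton]
      rintro _ (rfl | rfl) <;> simp [insert_subset_iff, *]), card_pair hM]

end CyclePairs

section FourSets

open scoped Classical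

variable {V : Type*} {A B : Finset V}

lemma card_inter_add_card_inter_add_card_sdiff (hAB : Disjoint A B) (t : Finset V) :
    #(t ∩ A) + #(t ∩ B) + #(t \ (A ∪ B)) = #t := by
  rw [← card_union_of_disjoint (disjoint_of_subset_left inter_subset_right
      (disjoint_of_subset_right inter_subset_right hAB)), ← inter_union_distrib_left,
    card_inter_add_card_sdiff]

lemma inter_union_inter_union_sdiff (t : Finset V) : t ∩ A ∪ t ∩ B ∪ t \ (A ∪ B) = t := by
  ext x
  simp only [mem_union, mem_inter, mem_sdiff]
  tauto

lemma exists_eq_of_card_inter_eq_one (hAB : Disjoint A B) {t : Finset V} (ht : #t = 4)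
    (hA : #(t ∩ A) = 1) (hB : #(t ∩ B) = 1) :
    ∃ a ∈ A, ∃ b ∈ B, ∃ c d, c ∉ A ∪ B ∧ d ∉ A ∪ B ∧ c ≠ d ∧ t = {a, b, c, d} := by
  obtain ⟨a, ha⟩ := card_eq_one.mp hA
  obtain ⟨b, hb⟩ := card_eq_one.mp hB
  obtain ⟨c, d, hcd, hO⟩ := card_eq_two.mp (show #(t \ (A ∪ B)) = 2 by
    have := card_inter_add_card_inter_add_card_sdiff hAB t
    omega)
  refine ⟨a, (mem_inter.mp (ha ▸ mem_singleton_self a)).2, b,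
    (mem_inter.mp (hb ▸ mem_singleton_self b)).2, c, d,
    (mem_sdiff.mp (hO ▸ mem_insert_self c {d})).2,
    (mem_sdiff.mp (hO ▸ mem_insert_of_mem (mem_singleton_self d))).2, hcd, ?_⟩
  rw [← inter_union_inter_union_sdiff (A := A) (B := B) t, ha, hb, hO, union_assoc,
    ← insert_eq, ← insert_eq]

variable [Fintype V]

lemma filter_disjoint_powersetCard_univ (A : Finset V) (r : ℕ) :
    (univ.powersetCard r).filter (Disjoint · A) = Aᶜ.powersetCard r := by
  ext t
  simp [subset_compl_iff_disjoint_right, and_comm]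

lemma card_filter_disjoint_or_disjoint (A B : Finset V) (r : ℕ) :
    #((univ.powersetCard r).filter fun t => Disjoint t A ∨ Disjoint t B) +
        (#(A ∪ B)ᶜ).choose r = (#Aᶜ).choose r + (#Bᶜ).choose r := by
  have h := card_union_add_card_inter ((univ.powersetCard r).filter (Disjoint · A))
    ((univ.powersetCard r).filter (Disjoint · B))
  rw [← filter_or, ← filter_and] at h
  simp only [← disjoint_union_right, filter_disjoint_powersetCard_univ, card_powersetCard] at h
  exact h

lemma card_filter_card_inter_eq_one (hAB : Disjoint A B) (r : ℕ) :
    #((univ.powersetCard (r + 2)).filter fun t => #(t ∩ A) = 1 ∧ #(t ∩ B) = 1) =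
      #A * #B * (#(A ∪ B)ᶜ).choose r := by
  have hpieces : ∀ a ⊆ A, ∀ b ⊆ B, ∀ o ⊆ (A ∪ B)ᶜ,
      (a ∪ b ∪ o) ∩ A = a ∧ (a ∪ b ∪ o) ∩ B = b ∧ (a ∪ b ∪ o) \ (A ∪ B) = o := by
    intro a ha b hb o ho
    simp only [subset_iff, mem_compl, mem_union, not_or] at ha hb ho
    have hdis := Finset.disjoint_left.mp hAB
    refine ⟨?_, ?_, ?_⟩ <;> ext x <;> simp only [mem_inter, mem_union, mem_sdiff] <;>
      have := @ha x <;> have := @hb x <;> have := @ho x <;> have := @hdis x <;> tauto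
  rw [← Nat.choose_one_right #A, ← Nat.choose_one_right #B, ← card_powersetCard,
    ← card_powersetCard, ← card_powersetCard, ← card_product, ← card_product]
  refine card_nbij' (fun t => ((t ∩ A, t ∩ B), t \ (A ∪ B))) (fun p => p.1.1 ∪ p.1.2 ∪ p.2)
    ?_ ?_ ?_ ?_
  · intro t ht
    simp only [coe_filter, mem_powersetCard_univ, Set.mem_ofPred_eq] at ht
    have := card_inter_add_card_inter_add_card_sdiff hAB t
    simp only [coe_product, Set.mem_prod, mem_coe, mem_powersetCard]
    refine ⟨⟨⟨inter_subset_right, ht.2.1⟩, inter_subset_right, ht.2.2⟩, ?_, by omega⟩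
    intro x hx
    simp only [mem_sdiff, mem_compl] at hx ⊢
    exact hx.2
  · rintro ⟨⟨a, b⟩, o⟩ h
    simp only [coe_product, Set.mem_prod, mem_coe, mem_powersetCard] at h
    obtain ⟨⟨⟨ha, ha'⟩, hb, hb'⟩, ho, ho'⟩ := h
    obtain ⟨hA, hB, hO⟩ := hpieces a ha b hb o ho
    have := card_inter_add_card_inter_add_card_sdiff hAB (a ∪ b ∪ o)
    simp only [coe_filter, mem_powersetCard_univ, Set.mem_ofPred_eq, hA, hB, hO] at this ⊢
    omega
  · intro t _
    exact inter_union_inter_union_sdiff t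
  · rintro ⟨⟨a, b⟩, o⟩ h
    simp only [coe_product, Set.mem_prod, mem_coe, mem_powersetCard] at h
    obtain ⟨hA, hB, hO⟩ := hpieces a h.1.1.1 b h.1.2.1 o h.2.1
    simp only [hA, hB, hO]

end FourSets

lemma Nat.cast_choose_four (a : ℕ) :
    (a.choose 4 : ℚ) = a * (a - 1) * (a - 2) * (a - 3) / 24 := by
  simp [Nat.cast_choose_eq_descPochhammer_div, descPochhammer_succ_eval, Nat.factorial]

section CompleteBipartiteOn

open scoped Classical

variable {V : Type*}

def completeBipartiteOn (A B : Finset V) : SimpleGraph V :=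
  fromRel fun x y => x ∈ A ∧ y ∈ B

lemma completeBipartiteOn_comm (A B : Finset V) :
    completeBipartiteOn A B = completeBipartiteOn B A := by
  ext x y
  simp only [completeBipartiteOn, fromRel_adj]
  tauto

@[simp]
lemma completeBipartiteOn_empty (B : Finset V) : completeBipartiteOn ∅ B = ⊥ := by
  ext x y
  simp [completeBipartiteOn]

@[simp]
lemma completeBipartiteOn_adj {A B : Finset V} {x y : V} :
    (completeBipartiteOn A B).Adj x y ↔ x ≠ y ∧ (x ∈ A ∧ y ∈ B ∨ y ∈ A ∧ x ∈ B) :=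
  fromRel_adj ..

variable {A B : Finset V}

lemma isClique_top_sdiff_completeBipartiteOn {t : Finset V} (h : Disjoint t A ∨ Disjoint t B) :
    (⊤ \ completeBipartiteOn A B).IsClique (t : Set V) := by
  intro x hx y hy hxy
  rw [mem_coe] at hx hy
  simp only [sdiff_adj, top_adj, completeBipartiteOn_adj]
  rcases h with h | h <;>
  · have := Finset.disjoint_left.mp h hx
    have := Finset.disjoint_left.mp h hy
    tauto

lemma not_fourCycleOn_top_sdiff_completeBipartiteOn (hAB : Disjoint A B) {t : Finset V}
    (ht : #t = 4) (hA : 1 < #(t ∩ A)) (hB : 0 < #(t ∩ B)) :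
    ¬ fourCycleOn (⊤ \ completeBipartiteOn A B) t := by
  obtain ⟨z₁, hz₁, z₂, hz₂, hz⟩ := one_lt_card.mp hA
  obtain ⟨w, hw⟩ := card_pos.mp hB
  rw [mem_inter] at hz₁ hz₂ hw
  have hne : ∀ z ∈ A, w ≠ z := fun z hz h => Finset.disjoint_left.mp hAB hz (h ▸ hw.2)
  exact not_fourCycleOn_of_not_adj _ ht hw.1 hz₁.1 hz₂.1 (hne _ hz₁.2) (hne _ hz₂.2) hz
    (by simp [completeBipartiteOn_adj, hw.2, hz₁.2])
    (by simp [completeBipartiteOn_adj, hw.2, hz₂.2])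

variable [Fintype V]

lemma ncard_edgeSet_completeBipartiteOn (hAB : Disjoint A B) :
    (completeBipartiteOn A B).edgeSet.ncard = #A * #B := by
  rw [← coe_edgeFinset, Set.ncard_coe_finset, ← card_product]
  symm
  refine card_nbij (fun p => s(p.1, p.2)) ?_ ?_ ?_
  · rintro ⟨x, y⟩ h
    simp only [coe_product, Set.mem_prod, mem_coe] at h
    simp only [mem_coe, mem_edgeFinset, mem_edgeSet, completeBipartiteOn_adj]
    exact ⟨fun hxy => Finset.disjoint_left.mp hAB h.1 (hxy ▸ h.2), Or.inl h⟩
  · rintro ⟨x, y⟩ h ⟨x', y'⟩ h' hxy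
    simp only [coe_product, Set.mem_prod, mem_coe] at h h'
    rcases Sym2.eq_iff.mp hxy with ⟨rfl, rfl⟩ | ⟨rfl, rfl⟩
    · rfl
    · exact (Finset.disjoint_left.mp hAB h.1 h'.2).elim
  · intro e he
    induction e using Sym2.ind with | _ x y =>
    rw [mem_coe, mem_edgeFinset, mem_edgeSet, completeBipartiteOn_adj] at he
    rcases he.2 with h | h
    · exact ⟨(x, y), by simpa using h, rfl⟩
    · exact ⟨(y, x), by simpa using h, Sym2.eq_swap⟩

lemma ncard_edgeSet_top_sdiff_completeBipartiteOn (hAB : Disjoint A B) :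
    (⊤ \ completeBipartiteOn A B).edgeSet.ncard + #A * #B = (Fintype.card V).choose 2 := by
  rw [edgeSet_sdiff, ← ncard_edgeSet_completeBipartiteOn hAB,
    Set.ncard_sdiff_add_ncard_of_subset (edgeSet_mono le_top), ← coe_edgeFinset,
    Set.ncard_coe_finset, card_edgeFinset_top_eq_card_choose_two]

lemma card_cyclePairsOn_top_sdiff_completeBipartiteOn (hAB : Disjoint A B) {t : Finset V}
    (ht : #t = 4) :
    #(cyclePairsOn (⊤ \ completeBipartiteOn A B) t) =
      (if Disjoint t A ∨ Disjoint t B then 3 else 0) +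
        (if #(t ∩ A) = 1 ∧ #(t ∩ B) = 1 then 2 else 0) := by
  by_cases h₀ : Disjoint t A ∨ Disjoint t B
  · have : #(t ∩ A) = 0 ∨ #(t ∩ B) = 0 := by
      simpa only [card_eq_zero, ← disjoint_iff_inter_eq_empty] using h₀
    rw [if_pos h₀, if_neg (by omega),
      card_cyclePairsOn_of_isClique _ ht (isClique_top_sdiff_completeBipartiteOn h₀)]
  have h₀' : 0 < #(t ∩ A) ∧ 0 < #(t ∩ B) := by
    simpa only [card_pos, ← not_disjoint_iff_nonempty_inter, not_or] using h₀
  by_cases h₁ : #(t ∩ A) = 1 ∧ #(t ∩ B) = 1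
  · obtain ⟨a, ha, b, hb, c, d, hc, hd, hcd, rfl⟩ :=
      exists_eq_of_card_inter_eq_one hAB ht h₁.1 h₁.2
    rw [mem_union, not_or] at hc hd
    have hab : a ≠ b := fun h => Finset.disjoint_left.mp hAB ha (h ▸ hb)
    have hac := ne_of_mem_of_not_mem ha hc.1
    have had := ne_of_mem_of_not_mem ha hd.1
    have hbc := ne_of_mem_of_not_mem hb hc.2
    have hbd := ne_of_mem_of_not_mem hb hd.2
    rw [if_neg h₀, if_pos h₁, card_cyclePairsOn_of_not_adj _ hab hac had hbc hbd hcd] <;>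
      simp [*]
  rw [if_neg h₀, if_neg h₁, cyclePairsOn_eq_empty, card_empty]
  rcases (by omega : 1 < #(t ∩ A) ∨ 1 < #(t ∩ B)) with h | h
  · exact not_fourCycleOn_top_sdiff_completeBipartiteOn hAB ht h h₀'.2
  · rw [completeBipartiteOn_comm]
    exact not_fourCycleOn_top_sdiff_completeBipartiteOn hAB.symm ht h h₀'.1

lemma card_cyclePairs_top_sdiff_completeBipartiteOn (hAB : Disjoint A B) :
    #(cyclePairs (⊤ \ completeBipartiteOn A B)) + 3 * (#(A ∪ B)ᶜ).choose 4 =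
      3 * ((#Aᶜ).choose 4 + (#Bᶜ).choose 4) + 2 * (#A * #B * (#(A ∪ B)ᶜ).choose 2) := by
  rw [card_cyclePairs_eq_sum, sum_congr rfl fun t ht =>
      card_cyclePairsOn_top_sdiff_completeBipartiteOn hAB (mem_powersetCard_univ.mp ht),
    sum_add_distrib, ← sum_filter, ← sum_filter, sum_const, sum_const, smul_eq_mul, smul_eq_mul]
  have h₁ := card_filter_disjoint_or_disjoint A B 4
  have h₂ := card_filter_card_inter_eq_one hAB 2
  simp only [Nat.reduceAdd] at h₂
  rw [← h₂]
  omega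

lemma epsilon_top_sdiff_completeBipartiteOn (hAB : Disjoint A B) :
    epsilon (⊤ \ completeBipartiteOn A B) + 3 * ((#Aᶜ).choose 4 + (#Bᶜ).choose 4) +
        2 * (#A * #B * (#(A ∪ B)ᶜ).choose 2) =
      ((Fintype.card V).choose 2 - #A * #B).choose 2 + 3 * (#(A ∪ B)ᶜ).choose 4 := by
  have hε := epsilon_add_card_cyclePairs (⊤ \ completeBipartiteOn A B)
  rw [Nat.eq_sub_of_add_eq (ncard_edgeSet_top_sdiff_completeBipartiteOn hAB)] at hε
  have := card_cyclePairs_top_sdiff_completeBipartiteOn hAB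
  omega

theorem epsilon_top_sdiff_completeBipartiteOn_sub_epsilon_top (hAB : Disjoint A B) :
    (epsilon (⊤ \ completeBipartiteOn A B) : ℚ) - epsilon (⊤ : SimpleGraph V) =
      (1 / 2) * #A * #B * ((#A : ℚ) + #B - 6) * Fintype.card V
        - (1 / 4) * #A * #B * (3 * (#A : ℚ) * #B + 2 * (#A : ℚ) ^ 2 + 2 * (#B : ℚ) ^ 2
          - 5 * #A - 5 * #B - 13) := by
  have h := epsilon_top_sdiff_completeBipartiteOn hAB
  have h₀ := epsilon_top_sdiff_completeBipartiteOn (disjoint_empty_left (∅ : Finset V))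
  simp only [completeBipartiteOn_empty, sdiff_bot, union_empty, compl_empty, card_univ,
    card_empty, mul_zero, zero_mul, add_zero, Nat.sub_zero] at h₀
  have hle : #A * #B ≤ (Fintype.card V).choose 2 :=
    (Nat.le_add_left _ _).trans (ncard_edgeSet_top_sdiff_completeBipartiteOn hAB).le
  obtain ⟨k, hk⟩ : ∃ k, #(A ∪ B)ᶜ = k := ⟨_, rfl⟩
  have hd : Fintype.card V = #A + #B + k := by
    have := card_le_univ (A ∪ B)
    rw [← hk, card_compl, ← card_union_of_disjoint hAB]
    omega
  have hAc : #Aᶜ = #B + k := by rw [card_compl]; omega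
  have hBc : #Bᶜ = #A + k := by rw [card_compl]; omega
  rw [hAc, hBc, hk] at h
  rw [hd] at h h₀ hle ⊢
  qify at h h₀
  push_cast [hle, Nat.cast_choose_two, Nat.cast_choose_four] at h h₀ ⊢
  linear_combination h - h₀

end CompleteBipartiteOn

lemma bip_eq_completeBipartiteOn (d m n : ℕ) :
    bip d m n = completeBipartiteOn (univ.filter fun i : Fin d => i < m)
      ((univ.filter fun i : Fin d => i < m + n) \ univ.filter fun i : Fin d => i < m) := by
  ext i j
  simp only [bip, completeBipartiteOn_adj, mem_sdiff, mem_filter, mem_univ, true_and]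
  constructor
  · intro h
    exact ⟨by rintro rfl; omega, by omega⟩
  · rintro ⟨-, h⟩
    omega

open scoped Classical in
theorem epsilon_complete_minus_bipartite_general (d m n : ℕ)
    (hmn : m + n ≤ d) :
    (epsilon ((⊤ : SimpleGraph (Fin d)) \ bip d m n) : ℚ)
      - (epsilon (⊤ : SimpleGraph (Fin d)) : ℚ)
    = (1 / 2) * m * n * ((m : ℚ) + n - 6) * d
      - (1 / 4) * m * n * (3 * (m : ℚ) * n + 2 * (m : ℚ) ^ 2 + 2 * (n : ℚ) ^ 2
          - 5 * m - 5 * n - 13) := by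
  have hB : #((univ.filter fun i : Fin d => i < m + n) \ univ.filter fun i : Fin d => i < m) =
      n := by
    rw [card_sdiff_of_subset (monotone_filter_right _ fun _ h => by omega),
      Fin.card_filter_val_lt, Fin.card_filter_val_lt]
    omega
  rw [bip_eq_completeBipartiteOn, epsilon_top_sdiff_completeBipartiteOn_sub_epsilon_top
    disjoint_sdiff, hB, Fin.card_filter_val_lt, Fintype.card_fin, min_eq_right (by omega)]

open scoped Classical in
theorem epsilon_complete_minus_bipartite (d m n : ℕ) (hm : 1 ≤ m) (hn : 1 ≤ n)
    (hmn : m + n ≤ d) :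
    (epsilon ((⊤ : SimpleGraph (Fin d)) \ bip d m n) : ℚ)
      - (epsilon (⊤ : SimpleGraph (Fin d)) : ℚ)
    = (1 / 2) * m * n * ((m : ℚ) + n - 6) * d
      - (1 / 4) * m * n * (3 * (m : ℚ) * n + 2 * (m : ℚ) ^ 2 + 2 * (n : ℚ) ^ 2
          - 5 * m - 5 * n - 13) :=
  epsilon_complete_minus_bipartite_general d m n hmn
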